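/- The policy a(π) satisfies the Bellman necessary condition for abstention: at any state s with V(s;π) < r⊥, the expected one-step continuation value under the abstention-stripped policy is at most V(s;π) < r⊥; and at any state s with V(s;π) ≥ r⊥, the continuation value of a(π) is at least r⊥. -/
import Mathlib


open Finset

attribute [local instance] Classical.propDecidable

variable {V : Type*}

/-- Expected terminal reward (value function) of policy `π` from state `s`
with `n` generation steps remaining; `e` is the end-of-sequence token and
`r` the terminal reward, collected only when `e` is emitted.  States already
containing `e` are terminal and have value `0`. -/
noncomputable def Vval [Fintype V] (e : V) (r : List V → ℝ)
    (π : List V → V → ℝ) : ℕ → List V → ℝ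
  | 0, _ => 0
  | n+1, s =>
      if e ∈ s then 0 else
      ∑ a : V, π s a * (if a = e then r (s ++ [a]) else Vval e r π n (s ++ [a]))

/-- Value of the dynamic value-thresholding policy `a(π)`: at any
non-terminal state whose value under `π` is below the abstention reward
`rb` it abstains and receives `rb`; otherwise it follows `π`. -/
noncomputable def Aval [Fintype V] (e : V) (r : List V → ℝ)
    (π : List V → V → ℝ) (rb : ℝ) : ℕ → List V → ℝ
  | 0, _ => 0
  | n+1, s =>
      if e ∈ s then 0 else
      if Vval e r π (n+1) s < rb then rb else
      ∑ a : V, π s a * (if a = e then r (s ++ [a]) else Aval e r π rb n (s ++ [a]))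

/-- One generation step with positive probability from a non-terminal state. -/
def Step (e : V) (π : List V → V → ℝ) (s s' : List V) : Prop :=
  e ∉ s ∧ ∃ a : V, 0 < π s a ∧ s' = s ++ [a]

/-- `s'` is reachable from `s` with positive probability under `π`. -/
def Reach (e : V) (π : List V → V → ℝ) : List V → List V → Prop :=
  Relation.ReflTransGen (Step e π)

lemma Vval_nonneg [Fintype V] (e : V) (r : List V → ℝ) (π : List V → V → ℝ)
    (hπ0 : ∀ s a, 0 ≤ π s a) (hr : ∀ y, 0 ≤ r y) :
    ∀ n s, 0 ≤ Vval e r π n s := by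
  intro n
  induction n with
  | zero => intro s; simp [Vval]
  | succ n ih =>
    intro s
    rw [Vval]
    split
    · exact le_refl _
    · refine Finset.sum_nonneg fun a _ => mul_nonneg (hπ0 s a) ?_
      split
      · exact hr _
      · exact ih _

lemma Vval_le_Aval [Fintype V] (e : V) (r : List V → ℝ) (π : List V → V → ℝ) (rb : ℝ)
    (hπ0 : ∀ s a, 0 ≤ π s a) :
    ∀ n s, Vval e r π n s ≤ Aval e r π rb n s := by
  intro n
  induction n with
  | zero => intro s; simp [Vval, Aval]
  | succ n ih =>
    intro s
    conv_rhs => rw [Aval]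
    split
    · next h => rw [Vval]; simp [h]
    · next h =>
      split
      · next h2 => exact le_of_lt h2
      · rw [Vval]
        simp only [h, if_false]
        refine Finset.sum_le_sum fun a _ => mul_le_mul_of_nonneg_left ?_ (hπ0 s a)
        split
        · exact le_refl _
        · exact ih _

/-- The dynamic policy `a(π)` satisfies the Bellman necessary condition for
abstention: at any non-terminal state with `V(s;π) < r⊥` the expected
one-step continuation value is at most `V(s;π) < r⊥`, and at any
non-terminal state with `V(s;π) ≥ r⊥` the continuation value of `a(π)` is
at least `r⊥`. -/
theorem bellman_necessary_condition [Fintype V]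
    (e : V) (r : List V → ℝ) (π : List V → V → ℝ) (rb : ℝ) (n : ℕ)
    (hπ0 : ∀ s a, 0 ≤ π s a) (hπ1 : ∀ s, ∑ a : V, π s a = 1)
    (hr : ∀ y, r y ∈ Set.Icc (0:ℝ) 1)
    (hrb0 : 0 < rb) (hrb1 : rb ≤ 1)
    (s : List V) (hnt : e ∉ s) :
    (Vval e r π (n+1) s < rb →
      (∑ a : V, π s a * (if a = e then r (s ++ [a]) else 0))
          ≤ Vval e r π (n+1) s ∧
      (∑ a : V, π s a * (if a = e then r (s ++ [a]) else 0)) < rb) ∧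
    (rb ≤ Vval e r π (n+1) s →
      rb ≤ ∑ a : V, π s a *
        (if a = e then r (s ++ [a]) else Aval e r π rb n (s ++ [a]))) := by
  have hV : Vval e r π (n+1) s =
      ∑ a : V, π s a * (if a = e then r (s ++ [a]) else Vval e r π n (s ++ [a])) := by
    rw [Vval]; simp [hnt]
  constructor
  · intro hlt
    have h1 : (∑ a : V, π s a * (if a = e then r (s ++ [a]) else 0))
        ≤ Vval e r π (n+1) s := by
      rw [hV]
      refine Finset.sum_le_sum fun a _ => mul_le_mul_of_nonneg_left ?_ (hπ0 s a)
      split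
      · exact le_refl _
      · exact Vval_nonneg e r π hπ0 (fun y => (hr y).1) _ _
    exact ⟨h1, lt_of_le_of_lt h1 hlt⟩
  · intro hge
    calc rb ≤ Vval e r π (n+1) s := hge
      _ ≤ _ := by
        rw [hV]
        refine Finset.sum_le_sum fun a _ => mul_le_mul_of_nonneg_left ?_ (hπ0 s a)
        split
        · exact le_refl _
        · exact Vval_le_Aval e r π rb hπ0 _ _
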